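/- arXiv:2511.09316 — 6 statements merged into one kernel-verified Lean document; each statement's English description precedes it below -/
import Mathlib

section
/- Let x, x̃ ∈ X, let z★ be a longest common subsequence of x and x̃, and let ε★ ∈ E(x) and ε̃★ ∈ E(x̃) be deletion indicators such that apply(x, ε★) = apply(x̃, ε̃★) = z★. Then there exists a bijection m : E(x̃, ε̃★) → E(x, ε★) such that for every ε̃ ∈ E(x̃, ε̃★), apply(x̃, ε̃) = apply(x, m(ε̃)) and |m(ε̃)| = |ε̃|. -/
/-- Apply a deletion indicator: keep the tokens at positions `i` with `ε i = true`, in order. -/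
def applyDel {Ω : Type*} (x : List Ω) (ε : Fin x.length → Bool) : List Ω :=
  (List.finRange x.length).filterMap fun i => if ε i then some (x.get i) else none

/-- Number of retained tokens `|ε|`. -/
def retained {n : ℕ} (ε : Fin n → Bool) : ℕ :=
  (Finset.univ.filter fun i => ε i = true).card

/-- `z` is a longest common subsequence of `x` and `x̃`. -/
def IsLCS {Ω : Type*} (z x xt : List Ω) : Prop :=
  z.Sublist x ∧ z.Sublist xt ∧ ∀ w : List Ω, w.Sublist x → w.Sublist xt → w.length ≤ z.length

lemma bool_le_true' : ∀ (a b : Bool), a ≤ b → a = true → b = true := by decide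

lemma bool_le_false' : ∀ (a b : Bool), a ≤ b → b = false → a = false := by decide

lemma applyDel_congr {Ω : Type*} {l1 l2 : List Ω} (h : l1 = l2) (b : Fin l1.length → Bool) :
    applyDel l1 b = applyDel l2 (fun j => b (Fin.cast (by rw [h]) j)) := by
  subst h; rfl

lemma retained_cast {m n : ℕ} (h : n = m) (b : Fin m → Bool) :
    retained (fun j : Fin n => b (Fin.cast h j)) = retained b := by
  subst h; rfl

lemma finRange_map_cast {m n : ℕ} (h : m = n) :
    (List.finRange m).map (Fin.cast h) = List.finRange n := by
  subst h
  simp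

lemma filterMap_ite_eq_map_filter {α β : Type*} (p : α → Bool) (h : α → β) (l : List α) :
    l.filterMap (fun i => if p i then some (h i) else none) = (l.filter p).map h := by
  induction l with
  | nil => simp
  | cons a l ih => by_cases hp : p a <;> simp [List.filterMap_cons, List.filter_cons, hp, ih]

lemma filterMap_filter_of_none {α β : Type*} (p : α → Bool) (F : α → Option β) (l : List α)
    (h : ∀ i, p i = false → F i = none) :
    (l.filter p).filterMap F = l.filterMap F := by
  induction l with
  | nil => simp
  | cons a l ih =>
    by_cases hp : p a
    · simp [List.filter_cons, List.filterMap_cons, hp, ih]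
    · simp [List.filter_cons, List.filterMap_cons, hp, ih, h a (by simpa using hp)]

lemma applyDel_map' {α Ω : Type*} (f : α → Ω) (l : List α) (c : Fin l.length → Bool) :
    applyDel (l.map f) (fun j => c (Fin.cast (l.length_map f) j)) = (applyDel l c).map f := by
  simp only [applyDel, List.map_filterMap]
  rw [← finRange_map_cast (l.length_map f).symm, List.filterMap_map]
  apply List.filterMap_congr
  intro i _
  by_cases hc : c i <;> simp [hc, Function.comp]

lemma key {Ω : Type*} (x : List Ω) (es : Fin x.length → Bool) :
    ∃ e : {ε : Fin x.length → Bool // ∀ i, ε i ≤ es i} ≃ (Fin (applyDel x es).length → Bool),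
      ∀ ε, applyDel x ε.1 = applyDel (applyDel x es) (e ε) ∧ retained (e ε) = retained ε.1 := by
  classical
  set zsp : List (Fin x.length) := (List.finRange x.length).filter (fun i => es i) with hzsp
  have hmem : ∀ i, i ∈ zsp ↔ es i = true := by
    intro i; simp [hzsp, List.mem_filter]
  have hnd : zsp.Nodup := (List.nodup_finRange _).filter _
  have hzs : applyDel x es = zsp.map x.get := filterMap_ite_eq_map_filter _ _ _
  have lenEq : (applyDel x es).length = zsp.length := by rw [hzs, List.length_map]
  set g : Fin (applyDel x es).length → Fin x.length :=
    fun j => zsp.get (Fin.cast lenEq j) with hg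
  have hcastinj : ∀ {p q : ℕ} (h : p = q), Function.Injective (Fin.cast h) := by
    intro p q h a b hab
    subst h; exact hab
  have hginj : Function.Injective g :=
    (List.nodup_iff_injective_get.1 hnd).comp (hcastinj lenEq)
  have hges : ∀ j, es (g j) = true := fun j =>
    (hmem _).1 (List.mem_iff_get.2 ⟨Fin.cast lenEq j, rfl⟩)
  have hgsurj : ∀ i, es i = true → ∃ j, g j = i := by
    intro i hi
    obtain ⟨k, hk⟩ := List.mem_iff_get.1 ((hmem i).2 hi)
    exact ⟨Fin.cast lenEq.symm k, by simpa [hg] using hk⟩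
  have hbij : Function.Bijective
      (fun (ε : {ε : Fin x.length → Bool // ∀ i, ε i ≤ es i}) =>
        (fun j => ε.1 (g j) : Fin (applyDel x es).length → Bool)) := by
    constructor
    · intro ε ε' h
      apply Subtype.ext; funext i
      by_cases hi : es i = true
      · obtain ⟨j, rfl⟩ := hgsurj i hi
        exact congrFun h j
      · rw [bool_le_false' _ _ (ε.2 i) (by simpa using hi),
          bool_le_false' _ _ (ε'.2 i) (by simpa using hi)]
    · intro b
      refine ⟨⟨fun i => if h : ∃ j, g j = i then b h.choose else false, ?_⟩, ?_⟩
      · intro i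
        dsimp only
        by_cases hi : es i = true
        · rw [hi]; exact Bool.le_true _
        · rw [dif_neg]
          · exact Bool.false_le _
          · rintro ⟨j, rfl⟩; exact hi (hges j)
      · funext j
        dsimp only
        have hex : ∃ j', g j' = g j := ⟨j, rfl⟩
        have hch : hex.choose = j := hginj hex.choose_spec
        rw [dif_pos hex, hch]
  refine ⟨Equiv.ofBijective _ hbij, ?_⟩
  intro ε
  constructor
  · -- applyDel equality
    show applyDel x ε.1 = applyDel (applyDel x es) (fun j => ε.1 (g j))
    rw [applyDel_congr hzs]
    refine Eq.trans ?_ (applyDel_map' x.get zsp (fun k => ε.1 (zsp.get k))).symm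
    have h1 : applyDel x ε.1 = zsp.filterMap
        (fun i => if ε.1 i then some (x.get i) else none) := by
      rw [applyDel, hzsp,
        filterMap_filter_of_none (fun i => es i) _ _ ?_]
      intro i hi
      rw [bool_le_false' _ _ (ε.2 i) hi]
      simp
    rw [h1]
    conv_lhs => rw [← List.map_get_finRange zsp]
    rw [List.filterMap_map, applyDel, List.map_filterMap]
    apply List.filterMap_congr
    intro k _
    by_cases hk : ε.1 (zsp.get k) <;> simp [hk, Function.comp]
  · -- retained equality
    show retained (fun j => ε.1 (g j)) = retained ε.1
    apply Finset.card_bij (fun j _ => g j)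
    · intro j hj
      simp only [Finset.mem_filter, Finset.mem_univ, true_and] at hj ⊢
      exact hj
    · intro a _ b _ h; exact hginj h
    · intro i hi
      simp only [Finset.mem_filter, Finset.mem_univ, true_and] at hi
      obtain ⟨j, rfl⟩ := hgsurj i (bool_le_true' _ _ (ε.2 i) hi)
      exact ⟨j, by simpa using hi, rfl⟩

/-- there is a bijection between `E(x̃, ε̃★)` and `E(x, ε★)` preserving the
resulting subsequence (and hence the number of retained tokens). -/
theorem stmt0 {Ω : Type*} (x xt zs : List Ω)
    (es : Fin x.length → Bool) (ets : Fin xt.length → Bool)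
    (hz : IsLCS zs x xt)
    (h1 : applyDel x es = zs) (h2 : applyDel xt ets = zs) :
    ∃ m : {et : Fin xt.length → Bool // ∀ i, et i ≤ ets i} ≃
          {ε : Fin x.length → Bool // ∀ i, ε i ≤ es i},
      ∀ et, applyDel xt et.1 = applyDel x (m et).1 ∧ retained (m et).1 = retained et.1 := by
  subst h1
  obtain ⟨Ex, hEx⟩ := key x es
  obtain ⟨Ext, hExt⟩ := key xt ets
  have hl : (applyDel xt ets).length = (applyDel x es).length := by rw [h2]
  refine ⟨Ext.trans ((Equiv.arrowCongr (finCongr hl) (Equiv.refl Bool)).trans Ex.symm), ?_⟩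
  intro et
  set m := Ext.trans ((Equiv.arrowCongr (finCongr hl) (Equiv.refl Bool)).trans Ex.symm) with hmdef
  have hm : Ex (m et) = fun j => Ext et (Fin.cast hl.symm j) := by
    funext j
    simp [hmdef, Equiv.arrowCongr, finCongr, Function.comp]
  constructor
  · calc applyDel xt et.1 = applyDel (applyDel xt ets) (Ext et) := (hExt et).1
      _ = applyDel (applyDel x es) (fun j => Ext et (Fin.cast (by rw [h2]) j)) :=
        applyDel_congr h2 _
      _ = applyDel x (m et).1 := by rw [(hEx (m et)).1, hm]
  · calc retained (m et).1 = retained (Ex (m et)) := ((hEx (m et)).2).symm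
      _ = retained (fun j => Ext et (Fin.cast hl.symm j)) := by rw [hm]
      _ = retained (Ext et) := retained_cast hl.symm _
      _ = retained et.1 := (hExt et).2
end

section
/- Let x, x̃ ∈ X, let ψ, ψ̃ ∈ (0,1), and let ε ∈ E(x) and ε̃ ∈ E(x̃) be deletion indicators with apply(x, ε) = apply(x̃, ε̃) (so in particular |ε| = |ε̃|). Then for every base classifier f̄ : X → Y and every class y ∈ Y, s_{f̄,ψ̃}(ε̃, x̃) = (ψ̃^{|x̃|} / ψ^{|x|}) · ρ(ψ, ψ̃)^{|ε|} · s_{f̄,ψ}(ε, x), where ρ(ψ, ψ̃) := ψ(1−ψ̃)/(ψ̃(1−ψ)). -/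
/-- `q_ψ(ε|x) = ψ^{|x|-|ε|} (1-ψ)^{|ε|}`. -/
noncomputable def qdel {Ω : Type*} (ψ : ℝ) (x : List Ω) (ε : Fin x.length → Bool) : ℝ :=
  ψ ^ (x.length - retained ε) * (1 - ψ) ^ (retained ε)

/-- The score `s_{f̄,ψ}(ε, x) = q_ψ(ε|x)·1[f̄(apply(x,ε)) = y]`. -/
noncomputable def score {Ω Y : Type*} [DecidableEq Y] (f : List Ω → Y) (y : Y) (ψ : ℝ)
    (x : List Ω) (ε : Fin x.length → Bool) : ℝ :=
  qdel ψ x ε * (if f (applyDel x ε) = y then 1 else 0)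

theorem retained_eq_countP {n : ℕ} (ε : Fin n → Bool) :
    retained ε = (List.finRange n).countP ε := by
  simp [retained, Fin.univ_def, Finset.filter, List.countP_eq_length_filter]

theorem length_applyDel {Ω : Type*} (x : List Ω) (ε : Fin x.length → Bool) :
    (applyDel x ε).length = retained ε := by
  rw [applyDel, List.length_filterMap_eq_countP, retained_eq_countP]
  congr 1
  funext i
  cases ε i <;> rfl

theorem retained_le {n : ℕ} (ε : Fin n → Bool) : retained ε ≤ n :=
  (Finset.card_le_univ _).trans_eq (Fintype.card_fin n)

theorem qdel_eq_pow_mul_odds_pow {Ω : Type*} {ψ : ℝ} (hψ : ψ ≠ 0) (x : List Ω)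
    (ε : Fin x.length → Bool) :
    qdel ψ x ε = ψ ^ x.length * ((1 - ψ) / ψ) ^ retained ε := by
  rw [qdel, pow_sub₀ ψ hψ (retained_le ε), div_pow]
  ring

/-- relation between scores at a pair of inputs with matching deletions. -/
theorem stmt1 {Ω Y : Type*} [DecidableEq Y] (x xt : List Ω)
    (ψ ψt : ℝ) (hψ : ψ ∈ Set.Ioo (0 : ℝ) 1) (hψt : ψt ∈ Set.Ioo (0 : ℝ) 1)
    (ε : Fin x.length → Bool) (εt : Fin xt.length → Bool)
    (happly : applyDel x ε = applyDel xt εt)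
    (f : List Ω → Y) (y : Y) :
    score f y ψt xt εt =
      ψt ^ xt.length / ψ ^ x.length *
        (ψ * (1 - ψt) / (ψt * (1 - ψ))) ^ retained ε * score f y ψ x ε := by
  have hψ0 : ψ ≠ 0 := hψ.1.ne'
  have hodds : (1 - ψ) / ψ ≠ 0 := div_ne_zero (sub_ne_zero.2 hψ.2.ne') hψ0
  have hret : retained εt = retained ε := by
    rw [← length_applyDel, ← length_applyDel, happly]
  rw [score, score, qdel_eq_pow_mul_odds_pow hψ0, qdel_eq_pow_mul_odds_pow hψt.1.ne', hret, happly,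
    show ψ * (1 - ψt) / (ψt * (1 - ψ)) = (1 - ψt) / ψt / ((1 - ψ) / ψ) by field_simp]
  generalize (1 - ψ) / ψ = r at hodds
  generalize (1 - ψt) / ψt = rt
  rw [div_pow]
  field_simp
end

section
/- Let x ∈ X, ε★ ∈ E(x), ψ ∈ (0,1), f̄ : X → Y a base classifier and y ∈ Y. Then Σ_{ε ∈ E(x) \ E(x, ε★)} s_{f̄,ψ}(ε, x) ≤ 1 − ψ^{|x| − |ε★|}. -/
/-- The smoothed class probability `p_y(x; f̄, ψ) = Σ_{ε ∈ E(x)} s_{f̄,ψ}(ε, x)`. -/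
noncomputable def smoothedProb {Ω Y : Type*} [DecidableEq Y] (f : List Ω → Y) (y : Y)
    (ψ : ℝ) (x : List Ω) : ℝ :=
  ∑ ε : Fin x.length → Bool, score f y ψ x ε

lemma sum_prod_bool {n : ℕ} (g : Fin n → Bool → ℝ) :
    ∑ ε : Fin n → Bool, ∏ i, g i (ε i) = ∏ i, (g i true + g i false) := by
  have := Finset.prod_univ_sum (fun _ : Fin n => (Finset.univ : Finset Bool)) g
  rw [Fintype.piFinset_univ] at this
  rw [← this]
  congr 1; funext i
  simp [Fintype.sum_bool]

lemma qdel_eq_prod {Ω : Type*} (ψ : ℝ) (x : List Ω) (ε : Fin x.length → Bool) :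
    qdel ψ x ε = ∏ i, (if ε i then (1 - ψ) else ψ) := by
  rw [qdel, retained, Finset.prod_ite, Finset.prod_const, Finset.prod_const]
  have h := Finset.card_filter_add_card_filter_not
    (s := (Finset.univ : Finset (Fin x.length))) (p := fun i => ε i = true)
  simp only [Finset.card_univ, Fintype.card_fin] at h
  have : (Finset.univ.filter fun i => ¬ ε i = true).card
      = x.length - (Finset.univ.filter fun i => ε i = true).card := by omega
  rw [this, mul_comm]

/-- `Σ_{ε ∈ E(x) \ E(x, ε★)} s_{f̄,ψ}(ε, x) ≤ 1 − ψ^{|x| − |ε★|}`. -/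
theorem stmt5 {Ω Y : Type*} [DecidableEq Y] (x : List Ω) (es : Fin x.length → Bool)
    (ψ : ℝ) (hψ : ψ ∈ Set.Ioo (0 : ℝ) 1) (f : List Ω → Y) (y : Y) :
    ∑ ε ∈ Finset.univ.filter (fun ε : Fin x.length → Bool => ¬ ∀ j, ε j ≤ es j),
        score f y ψ x ε ≤ 1 - ψ ^ (x.length - retained es) := by
  obtain ⟨hψ0, hψ1⟩ := hψ
  have hq0 : ∀ ε : Fin x.length → Bool, 0 ≤ qdel ψ x ε := fun ε => by
    unfold qdel
    apply mul_nonneg <;> apply pow_nonneg <;> linarith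
  -- g' i b = if b ≤ es i then (if b then 1-ψ else ψ) else 0
  set g' : Fin x.length → Bool → ℝ :=
    fun i b => if b ≤ es i then (if b then (1 - ψ) else ψ) else 0 with hg'
  have h2 : ∑ ε ∈ Finset.univ.filter (fun ε : Fin x.length → Bool => ∀ j, ε j ≤ es j),
      qdel ψ x ε = ψ ^ (x.length - retained es) := by
    rw [Finset.sum_filter]
    have key : ∀ ε : Fin x.length → Bool,
        (if ∀ j, ε j ≤ es j then qdel ψ x ε else 0) = ∏ i, g' i (ε i) := by
      intro ε
      by_cases h : ∀ j, ε j ≤ es j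
      · rw [if_pos h, qdel_eq_prod]
        exact Finset.prod_congr rfl fun i _ => by rw [hg']; simp [h i]
      · rw [if_neg h]
        push_neg at h
        obtain ⟨j, hj⟩ := h
        exact (Finset.prod_eq_zero (Finset.mem_univ j) (by rw [hg']; simp [hj])).symm
    rw [Finset.sum_congr rfl fun ε _ => key ε, sum_prod_bool]
    have : ∀ i, g' i true + g' i false = if es i then 1 else ψ := by
      intro i
      rw [hg']
      cases h : es i <;> simp [h] <;> ring
    rw [Finset.prod_congr rfl fun i _ => this i, Finset.prod_ite, Finset.prod_const,
      Finset.prod_const, one_pow, one_mul]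
    congr 1
    have h := Finset.card_filter_add_card_filter_not
      (s := (Finset.univ : Finset (Fin x.length))) (p := fun i => es i = true)
    simp only [Finset.card_univ, Fintype.card_fin] at h
    rw [retained]
    omega
  have h1 : ∑ ε : Fin x.length → Bool, qdel ψ x ε = 1 := by
    calc ∑ ε : Fin x.length → Bool, qdel ψ x ε
        = ∑ ε : Fin x.length → Bool, ∏ i, (if ε i then (1 - ψ) else ψ) := by
          exact Finset.sum_congr rfl fun ε _ => qdel_eq_prod ψ x ε
      _ = ∏ _i : Fin x.length, ((if (true : Bool) then (1 - ψ) else ψ)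
            + (if (false : Bool) then (1 - ψ) else ψ)) :=
          sum_prod_bool fun _ b => if b then (1 - ψ) else ψ
      _ = 1 := by simp
  have h3 : ∑ ε ∈ Finset.univ.filter (fun ε : Fin x.length → Bool => ¬ ∀ j, ε j ≤ es j),
      qdel ψ x ε = 1 - ψ ^ (x.length - retained es) := by
    have := Finset.sum_filter_add_sum_filter_not (Finset.univ : Finset (Fin x.length → Bool))
      (fun ε => ∀ j, ε j ≤ es j) (qdel ψ x)
    rw [h2, h1] at this
    linarith
  rw [← h3]
  apply Finset.sum_le_sum
  intro ε _
  rw [score]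
  rcases le_or_gt (qdel ψ x ε * (if f (applyDel x ε) = y then 1 else 0)) (qdel ψ x ε) with h | h
  · exact h
  · exfalso
    split at h <;> simp_all <;> nlinarith [hq0 ε]
end

section
/- Let x ∈ X, ε★ ∈ E(x), ψ ∈ (0,1), f̄ : X → Y a base classifier and y ∈ Y. Then Σ_{ε ∈ E(x, ε★)} s_{f̄,ψ}(ε, x) ≥ p_y(x; f̄, ψ) − 1 + ψ^{|x| − |ε★|}. -/
/-- `Σ_{ε ∈ E(x, ε★)} s_{f̄,ψ}(ε, x) ≥ p_y(x; f̄, ψ) − 1 + ψ^{|x| − |ε★|}`. -/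
theorem stmt6 {Ω Y : Type*} [DecidableEq Y] (x : List Ω) (es : Fin x.length → Bool)
    (ψ : ℝ) (hψ : ψ ∈ Set.Ioo (0 : ℝ) 1) (f : List Ω → Y) (y : Y) :
    ∑ ε ∈ Finset.univ.filter (fun ε : Fin x.length → Bool => ∀ j, ε j ≤ es j),
        score f y ψ x ε ≥ smoothedProb f y ψ x - 1 + ψ ^ (x.length - retained es) := by
  obtain ⟨hψ0, hψ1⟩ := hψ
  set A := Finset.univ.filter (fun ε : Fin x.length → Bool => ∀ j, ε j ≤ es j) with hA
  -- qdel is nonneg and score ≤ qdel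
  have hq0 : ∀ ε : Fin x.length → Bool, 0 ≤ qdel ψ x ε := fun ε =>
    mul_nonneg (pow_nonneg hψ0.le _) (pow_nonneg (by linarith) _)
  have hs0 : ∀ ε : Fin x.length → Bool, 0 ≤ score f y ψ x ε := fun ε =>
    mul_nonneg (hq0 ε) (by positivity)
  have hsq : ∀ ε : Fin x.length → Bool, score f y ψ x ε ≤ qdel ψ x ε := fun ε => by
    unfold score
    rcases le_or_gt (if f (applyDel x ε) = y then (1:ℝ) else 0) 1 with h | h
    · calc qdel ψ x ε * _ ≤ qdel ψ x ε * 1 := mul_le_mul_of_nonneg_left h (hq0 ε)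
        _ = qdel ψ x ε := mul_one _
    · split_ifs at h <;> linarith
  -- A equals a piFinset
  have hApi : A = Fintype.piFinset (fun i => if es i then (Finset.univ : Finset Bool) else {false}) := by
    ext ε
    simp only [hA, Finset.mem_filter, Finset.mem_univ, true_and, Fintype.mem_piFinset]
    constructor
    · intro h i
      have := h i
      cases hesi : es i <;> cases hεi : ε i <;> simp_all <;> exact absurd this (by decide)
    · intro h i
      have := h i
      cases hesi : es i <;> cases hεi : ε i <;> simp_all <;> exact absurd this (by decide)
  -- qdel rewritten as product
  have hqprod : ∀ ε : Fin x.length → Bool, qdel ψ x ε = ∏ i, (if ε i then (1 - ψ) else ψ) := by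
    intro ε
    rw [Finset.prod_ite, Finset.prod_const, Finset.prod_const, qdel, retained]
    have h := Finset.card_filter_add_card_filter_not
      (s := (Finset.univ : Finset (Fin x.length))) (p := fun i => ε i = true)
    simp only [Finset.card_univ, Fintype.card_fin] at h
    have hc : (Finset.univ.filter fun i => ¬ ε i = true).card
        = x.length - (Finset.univ.filter fun i => ε i = true).card := by omega
    rw [hc, mul_comm]
  -- sum of qdel over all ε is 1
  have htotal : ∑ ε : Fin x.length → Bool, qdel ψ x ε = 1 := by
    simp only [hqprod]
    rw [← Fintype.piFinset_univ, ← Finset.prod_univ_sum (fun _ => (Finset.univ : Finset Bool))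
      (fun _ b => if b then (1 - ψ) else ψ)]
    simp
  -- sum of qdel over A is ψ ^ (x.length - retained es)
  have hAsum : ∑ ε ∈ A, qdel ψ x ε = ψ ^ (x.length - retained es) := by
    simp only [hqprod, hApi]
    rw [← Finset.prod_univ_sum (fun i => if es i then (Finset.univ : Finset Bool) else {false})
      (fun _ b => if b then (1 - ψ) else ψ)]
    have : ∀ i : Fin x.length, (∑ j ∈ (if es i then (Finset.univ : Finset Bool) else {false}),
        (if j then (1 - ψ) else ψ)) = if es i then 1 else ψ := by
      intro i; cases h : es i <;> simp
    rw [Finset.prod_congr rfl (fun i _ => this i), Finset.prod_ite, Finset.prod_const,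
      Finset.prod_const, one_pow, one_mul, retained]
    congr 1
    have h := Finset.card_filter_add_card_filter_not
      (s := (Finset.univ : Finset (Fin x.length))) (p := fun i => es i = true)
    simp only [Finset.card_univ, Fintype.card_fin] at h
    omega
  -- main inequality
  have hsplit : smoothedProb f y ψ x
      = ∑ ε ∈ A, score f y ψ x ε + ∑ ε ∈ Aᶜ, score f y ψ x ε := by
    rw [smoothedProb, ← Finset.sum_add_sum_compl A]
  have hqsplit : ∑ ε ∈ A, qdel ψ x ε + ∑ ε ∈ Aᶜ, qdel ψ x ε = 1 := by
    rw [Finset.sum_add_sum_compl A, htotal]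
  have hcompl : ∑ ε ∈ Aᶜ, score f y ψ x ε ≤ ∑ ε ∈ Aᶜ, qdel ψ x ε :=
    Finset.sum_le_sum fun ε _ => hsq ε
  have : ∑ ε ∈ Aᶜ, qdel ψ x ε = 1 - ψ ^ (x.length - retained es) := by
    rw [← hAsum]; linarith
  rw [ge_iff_le, hsplit]
  linarith
end

section
/- Greedy solution of a bounded knapsack minimization: Let N ∈ ℕ, let w, v : {0,…,N} → ℝ with w(i) > 0 and v(i) ≥ 0 for all i, such that i ↦ v(i)/w(i) is nondecreasing. Let c : {0,…,N} → ℕ and let W ∈ ℝ with 0 < W ≤ Σ_{i=0}^{N} c(i)·w(i). Define H★ := min{ H ∈ {0,…,N} : Σ_{i=0}^{H} c(i)·w(i) ≥ W } and define h★ : {0,…,N} → ℕ by h★(i) := c(i) for i < H★, h★(H★) := ⌊(W − Σ_{j=0}^{H★−1} c(j)·w(j)) / w(H★)⌋, and h★(i) := 0 for i > H★. Then (a) 0 ≤ h★(H★) ≤ c(H★) and Σ_{i=0}^{N} w(i)·h★(i) ≤ W, and (b) for every h : {0,…,N} → ℕ with h(i) ≤ c(i) for all i and Σ_{i=0}^{N}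 w(i)·h(i) ≥ W, one has Σ_{i=0}^{N} v(i)·h★(i) ≤ Σ_{i=0}^{N} v(i)·h(i). -/
/-- greedy solution of a bounded knapsack minimization problem. -/
theorem stmt9 (N : ℕ) (w v : ℕ → ℝ)
    (hw : ∀ i ≤ N, 0 < w i) (hv : ∀ i ≤ N, 0 ≤ v i)
    (hmono : ∀ i j, i ≤ j → j ≤ N → v i / w i ≤ v j / w j)
    (c : ℕ → ℕ) (W : ℝ) (hW0 : 0 < W)
    (hWle : W ≤ ∑ i ∈ Finset.range (N + 1), (c i : ℝ) * w i)
    (H : ℕ)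
    (hH : H = sInf {h | h ≤ N ∧ W ≤ ∑ i ∈ Finset.range (h + 1), (c i : ℝ) * w i})
    (hstar : ℕ → ℤ)
    (h1 : ∀ i < H, hstar i = c i)
    (h2 : hstar H = ⌊(W - ∑ j ∈ Finset.range H, (c j : ℝ) * w j) / w H⌋)
    (h3 : ∀ i, H < i → hstar i = 0) :
    (0 ≤ hstar H ∧ hstar H ≤ (c H : ℤ) ∧
      ∑ i ∈ Finset.range (N + 1), w i * (hstar i : ℝ) ≤ W) ∧
    ∀ h : ℕ → ℕ, (∀ i ≤ N, h i ≤ c i) →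
      W ≤ ∑ i ∈ Finset.range (N + 1), w i * (h i : ℝ) →
      ∑ i ∈ Finset.range (N + 1), v i * (hstar i : ℝ) ≤
        ∑ i ∈ Finset.range (N + 1), v i * (h i : ℝ) := by
  set S : Set ℕ := {h | h ≤ N ∧ W ≤ ∑ i ∈ Finset.range (h + 1), (c i : ℝ) * w i} with hSdef
  have hNS : N ∈ S := ⟨le_refl N, hWle⟩
  have hHS : H ∈ S := by rw [hH]; exact Nat.sInf_mem ⟨N, hNS⟩
  have hHN : H ≤ N := hHS.1
  have hWH : W ≤ ∑ i ∈ Finset.range (H + 1), (c i : ℝ) * w i := hHS.2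
  set P : ℝ := ∑ j ∈ Finset.range H, (c j : ℝ) * w j with hPdef
  have hwH : 0 < w H := hw H hHN
  have hPW : P < W := by
    rcases Nat.eq_zero_or_pos H with h0 | h0
    · simp [hPdef, h0, hW0]
    · have hnot : H - 1 ∉ S := by
        rw [hH]; exact Nat.notMem_of_lt_sInf (by omega)
      by_contra hcon
      push_neg at hcon
      exact hnot ⟨by omega, by
        have : H - 1 + 1 = H := by omega
        rw [this]; exact hcon⟩
  have hWP : W ≤ P + (c H : ℝ) * w H := by
    rw [Finset.sum_range_succ] at hWH; exact hWH
  -- part (a)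
  have ha1 : 0 ≤ hstar H := by
    rw [h2]
    exact Int.floor_nonneg.2 (div_nonneg (by linarith) hwH.le)
  have ha2 : hstar H ≤ (c H : ℤ) := by
    have hle : (W - P) / w H ≤ (c H : ℝ) := by
      rw [div_le_iff₀ hwH]; linarith
    have : (hstar H : ℝ) ≤ (c H : ℝ) := by
      rw [h2]; exact le_trans (Int.floor_le _) hle
    exact_mod_cast this
  have ha3 : ∑ i ∈ Finset.range (N + 1), w i * (hstar i : ℝ) ≤ W := by
    have hsub : Finset.range (H + 1) ⊆ Finset.range (N + 1) :=
      Finset.range_subset_range.2 (by omega)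
    have heq : ∑ i ∈ Finset.range (N + 1), w i * (hstar i : ℝ)
        = ∑ i ∈ Finset.range (H + 1), w i * (hstar i : ℝ) := by
      refine (Finset.sum_subset hsub fun i _ hi => ?_).symm
      have : H < i := by
        simp only [Finset.mem_range] at hi; omega
      simp [h3 i this]
    rw [heq, Finset.sum_range_succ]
    have heq2 : ∑ i ∈ Finset.range H, w i * (hstar i : ℝ) = P := by
      refine Finset.sum_congr rfl fun i hi => ?_
      rw [h1 i (Finset.mem_range.1 hi)]; push_cast; ring
    rw [heq2]
    have : (hstar H : ℝ) ≤ (W - P) / w H := by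
      rw [h2]; exact Int.floor_le _
    have : w H * (hstar H : ℝ) ≤ W - P := by
      rw [mul_comm, ← le_div_iff₀ hwH]; exact this
    linarith
  refine ⟨⟨ha1, ha2, ha3⟩, ?_⟩
  -- part (b)
  intro h hc hWh
  set rH : ℝ := v H / w H with hrH
  have hrH0 : 0 ≤ rH := div_nonneg (hv H hHN) hwH.le
  have key : ∀ i ∈ Finset.range (N + 1),
      0 ≤ (v i - rH * w i) * ((h i : ℝ) - (hstar i : ℝ)) := by
    intro i hi
    have hiN : i ≤ N := by simpa [Nat.lt_succ_iff] using Finset.mem_range.1 hi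
    have hwi : 0 < w i := hw i hiN
    rcases lt_trichotomy i H with hlt | heq | hgt
    · have e1 : v i - rH * w i ≤ 0 := by
        have := mul_le_mul_of_nonneg_right (hmono i H hlt.le hHN) hwi.le
        rw [div_mul_cancel₀ _ hwi.ne'] at this
        linarith
      have e2 : (h i : ℝ) - (hstar i : ℝ) ≤ 0 := by
        rw [h1 i hlt]
        have : (h i : ℝ) ≤ (c i : ℝ) := by exact_mod_cast hc i hiN
        push_cast; linarith
      nlinarith [e1, e2]
    · subst heq
      have : v i - rH * w i = 0 := by
        rw [hrH, div_mul_cancel₀ _ hwi.ne']; ring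
      rw [this]; simp
    · have e1 : 0 ≤ v i - rH * w i := by
        have := mul_le_mul_of_nonneg_right (hmono H i hgt.le hiN) hwi.le
        rw [div_mul_cancel₀ _ hwi.ne'] at this
        linarith
      have e2 : 0 ≤ (h i : ℝ) - (hstar i : ℝ) := by
        rw [h3 i hgt]; simp
      exact mul_nonneg e1 e2
  have sum1 : 0 ≤ ∑ i ∈ Finset.range (N + 1),
      (v i - rH * w i) * ((h i : ℝ) - (hstar i : ℝ)) := Finset.sum_nonneg key
  have sum2 : 0 ≤ rH * ((∑ i ∈ Finset.range (N + 1), w i * (h i : ℝ))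
      - ∑ i ∈ Finset.range (N + 1), w i * (hstar i : ℝ)) :=
    mul_nonneg hrH0 (by linarith)
  have expand : ∑ i ∈ Finset.range (N + 1), (v i * (h i : ℝ) - v i * (hstar i : ℝ))
      = (∑ i ∈ Finset.range (N + 1), (v i - rH * w i) * ((h i : ℝ) - (hstar i : ℝ)))
        + rH * ((∑ i ∈ Finset.range (N + 1), w i * (h i : ℝ))
          - ∑ i ∈ Finset.range (N + 1), w i * (hstar i : ℝ)) := by
    rw [mul_sub, Finset.mul_sum, Finset.mul_sum, ← Finset.sum_sub_distrib,
      ← Finset.sum_add_distrib]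
    exact Finset.sum_congr rfl fun i _ => by ring
  have final : 0 ≤ ∑ i ∈ Finset.range (N + 1),
      (v i * (h i : ℝ) - v i * (hstar i : ℝ)) := by
    rw [expand]; linarith
  rw [Finset.sum_sub_distrib] at final
  linarith
end

section
/- Greedy solution of a bounded knapsack maximization: Let N ∈ ℕ, let w, v : {0,…,N} → ℝ with w(i) > 0 and v(i) ≥ 0 for all i, such that i ↦ v(i)/w(i) is nonincreasing. Let c : {0,…,N} → ℕ and let μ ∈ ℝ with 0 ≤ μ ≤ Σ_{i=0}^{N} c(i)·w(i). Define H★ := min{ H ∈ {0,…,N} : Σ_{i=0}^{H} c(i)·w(i) ≥ μ } and define h★ : {0,…,N} → ℕ by h★(i) := c(i) for i < H★, h★(H★) := ⌈(μ − Σ_{j=0}^{H★−1} c(j)·w(j)) / w(H★)⌉, and h★(i) := 0 for i > H★. Then (a) 0 ≤ h★(H★) ≤ c(H★) and Σ_{i=0}^{N} w(i)·h★(i) ≥ μ, and (b) for every h : {0,…,N} → ℕ with h(i) ≤ c(i) for all i and Σ_{i=0}^{N} w(i)·h(i) ≤ μ, one has Σ_{i=0}^{N} v(i)·h(i) ≤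 Σ_{i=0}^{N} v(i)·h★(i). -/
/-- greedy solution of a bounded knapsack maximization problem. -/
theorem stmt10 (N : ℕ) (w v : ℕ → ℝ)
    (hw : ∀ i ≤ N, 0 < w i) (hv : ∀ i ≤ N, 0 ≤ v i)
    (hmono : ∀ i j, i ≤ j → j ≤ N → v j / w j ≤ v i / w i)
    (c : ℕ → ℕ) (μ : ℝ) (hμ0 : 0 ≤ μ)
    (hμle : μ ≤ ∑ i ∈ Finset.range (N + 1), (c i : ℝ) * w i)
    (H : ℕ)
    (hH : H = sInf {h | h ≤ N ∧ μ ≤ ∑ i ∈ Finset.range (h + 1), (c i : ℝ) * w i})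
    (hstar : ℕ → ℤ)
    (h1 : ∀ i < H, hstar i = c i)
    (h2 : hstar H = ⌈(μ - ∑ j ∈ Finset.range H, (c j : ℝ) * w j) / w H⌉)
    (h3 : ∀ i, H < i → hstar i = 0) :
    (0 ≤ hstar H ∧ hstar H ≤ (c H : ℤ) ∧
      μ ≤ ∑ i ∈ Finset.range (N + 1), w i * (hstar i : ℝ)) ∧
    ∀ h : ℕ → ℕ, (∀ i ≤ N, h i ≤ c i) →
      ∑ i ∈ Finset.range (N + 1), w i * (h i : ℝ) ≤ μ →
      ∑ i ∈ Finset.range (N + 1), v i * (h i : ℝ) ≤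
        ∑ i ∈ Finset.range (N + 1), v i * (hstar i : ℝ) := by
  have hNS : N ∈ {h | h ≤ N ∧ μ ≤ ∑ i ∈ Finset.range (h + 1), (c i : ℝ) * w i} :=
    ⟨le_refl N, hμle⟩
  have hHmem : H ∈ {h | h ≤ N ∧ μ ≤ ∑ i ∈ Finset.range (h + 1), (c i : ℝ) * w i} := by
    rw [hH]; exact Nat.sInf_mem ⟨N, hNS⟩
  obtain ⟨hHN, hHμ⟩ := hHmem
  have hwH := hw H hHN
  -- residual nonneg
  have hr0 : 0 ≤ μ - ∑ j ∈ Finset.range H, (c j : ℝ) * w j := by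
    rcases Nat.eq_zero_or_pos H with h0 | hpos
    · simp [h0]; linarith
    · have hk : (H - 1) ∉ {h | h ≤ N ∧ μ ≤ ∑ i ∈ Finset.range (h + 1), (c i : ℝ) * w i} := by
        rw [hH]; exact Nat.notMem_of_lt_sInf (by omega)
      have hne : ¬ (μ ≤ ∑ i ∈ Finset.range ((H - 1) + 1), (c i : ℝ) * w i) := by
        intro hle; exact hk ⟨by omega, hle⟩
      rw [show (H - 1) + 1 = H by omega] at hne
      linarith [not_le.mp hne]
  have hrle : μ - ∑ j ∈ Finset.range H, (c j : ℝ) * w j ≤ (c H : ℝ) * w H := by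
    rw [Finset.sum_range_succ] at hHμ; linarith
  have hceil0 : 0 ≤ hstar H := by
    rw [h2]; exact Int.ceil_nonneg (div_nonneg hr0 hwH.le)
  have hceilc : hstar H ≤ (c H : ℤ) := by
    rw [h2]
    refine Int.ceil_le.mpr ?_
    push_cast
    rw [div_le_iff₀ hwH]
    linarith
  -- split lemma
  have split : ∀ f : ℕ → ℝ, ∑ i ∈ Finset.range (N + 1), f i * ((hstar i : ℤ) : ℝ)
      = ∑ i ∈ Finset.range H, f i * (c i : ℝ) + f H * ((hstar H : ℤ) : ℝ) := by
    intro f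
    have hsub : Finset.range (H + 1) ⊆ Finset.range (N + 1) :=
      Finset.range_subset_range.mpr (by omega)
    rw [← Finset.sum_subset hsub]
    · rw [Finset.sum_range_succ]
      congr 1
      refine Finset.sum_congr rfl fun i hi => ?_
      rw [h1 i (Finset.mem_range.mp hi)]
      push_cast; ring
    · intro i _ hi
      rw [h3 i (by simpa using Finset.mem_range.not.mp hi)]
      simp
  have hwceil : μ - ∑ j ∈ Finset.range H, (c j : ℝ) * w j ≤ w H * ((hstar H : ℤ) : ℝ) := by
    rw [h2]
    have h1' := Int.le_ceil ((μ - ∑ j ∈ Finset.range H, (c j : ℝ) * w j) / w H)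
    have h2' := mul_le_mul_of_nonneg_left h1' hwH.le
    rwa [mul_div_cancel₀ _ (ne_of_gt hwH)] at h2'
  have hwsum : μ ≤ ∑ i ∈ Finset.range (N + 1), w i * ((hstar i : ℤ) : ℝ) := by
    rw [split w]
    have : ∑ j ∈ Finset.range H, (c j : ℝ) * w j = ∑ j ∈ Finset.range H, w j * (c j : ℝ) :=
      Finset.sum_congr rfl fun i _ => mul_comm _ _
    linarith [hwceil, this ▸ hwceil]
  refine ⟨⟨hceil0, hceilc, hwsum⟩, ?_⟩
  intro h hc hhw
  set ρ := v H / w H with hρ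
  have hρ0 : 0 ≤ ρ := div_nonneg (hv H hHN) hwH.le
  have term : ∀ i ∈ Finset.range (N + 1),
      v i * (h i : ℝ) - v i * ((hstar i : ℤ) : ℝ)
        ≤ ρ * (w i * (h i : ℝ) - w i * ((hstar i : ℤ) : ℝ)) := by
    intro i hi
    have hiN : i ≤ N := by
      have := Finset.mem_range.mp hi; omega
    have hwi := hw i hiN
    rcases lt_trichotomy i H with hlt | heq | hgt
    · rw [h1 i hlt]
      have hhc : (h i : ℝ) ≤ (c i : ℝ) := by exact_mod_cast hc i hiN
      have hratio : ρ ≤ v i / w i := hmono i H (le_of_lt hlt) hHN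
      have hvi : (v i / w i) * w i = v i := div_mul_cancel₀ _ (ne_of_gt hwi)
      push_cast
      nlinarith [mul_nonneg (sub_nonneg.mpr hratio) (mul_nonneg hwi.le (sub_nonneg.mpr hhc))]
    · subst heq
      have hvi : ρ * w i = v i := div_mul_cancel₀ _ (ne_of_gt hwi)
      rw [← hvi]
      exact le_of_eq (by ring)
    · rw [h3 i hgt]
      have hratio : v i / w i ≤ ρ := hmono H i (le_of_lt hgt) hiN
      have hvi : (v i / w i) * w i = v i := div_mul_cancel₀ _ (ne_of_gt hwi)
      push_cast
      nlinarith [mul_nonneg (sub_nonneg.mpr hratio) (mul_nonneg hwi.le (Nat.cast_nonneg (h i)))]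
  have hsum := Finset.sum_le_sum term
  rw [Finset.sum_sub_distrib, ← Finset.mul_sum, Finset.sum_sub_distrib] at hsum
  nlinarith [mul_nonneg hρ0 (sub_nonneg.mpr (le_trans hhw hwsum))]
end
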